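/- Suppose X, Y, A, B, A', B', W are jointly distributed finitely-valued random variables with H(W|X,Y)=0, max{H(W|X), H(W|Y)} ≤ δ, H(W|A) ≤ I(X:Y|A) − I(X:Y|W) + δ, and H(W|B) ≤ I(X:Y|B) − I(X:Y|W) + δ. Then 2·I(X:Y) ≤ I(X:Y|A) + I(X:Y|B) + I(A:B) + I(X:Y|A') + I(X:Y|B') + I(A':B') + C·δ for some absolute constant C (one may take C = 6). -/

import Mathlib

open scoped BigOperators

namespace PaperIngleton

open Classical in
/-- Probability of an event under a pmf `p` on a finite sample space. -/
noncomputable def prob {Ω : Type*} [Fintype Ω] (p : Ω → ℝ) (E : Ω → Prop) : ℝ :=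
  ∑ ω, if E ω then p ω else 0

/-- Shannon entropy of a finitely-valued random variable `X` under pmf `p`. -/
noncomputable def ent {Ω S : Type*} [Fintype Ω] [Fintype S] (p : Ω → ℝ) (X : Ω → S) : ℝ :=
  -∑ s : S, prob p (fun ω => X ω = s) * Real.log (prob p (fun ω => X ω = s))

/-- Conditional entropy `H(X|Y)`. -/
noncomputable def condEnt {Ω S T : Type*} [Fintype Ω] [Fintype S] [Fintype T]
    (p : Ω → ℝ) (X : Ω → S) (Y : Ω → T) : ℝ :=
  ent p (fun ω => (X ω, Y ω)) - ent p Y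

/-- Mutual information `I(X:Y)`. -/
noncomputable def mi {Ω S T : Type*} [Fintype Ω] [Fintype S] [Fintype T]
    (p : Ω → ℝ) (X : Ω → S) (Y : Ω → T) : ℝ :=
  ent p X + ent p Y - ent p (fun ω => (X ω, Y ω))

/-- Conditional mutual information `I(X:Y|Z)`. -/
noncomputable def cmi {Ω S T U : Type*} [Fintype Ω] [Fintype S] [Fintype T] [Fintype U]
    (p : Ω → ℝ) (X : Ω → S) (Y : Ω → T) (Z : Ω → U) : ℝ :=
  ent p (fun ω => (X ω, Z ω)) + ent p (fun ω => (Y ω, Z ω))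
    - ent p (fun ω => (X ω, Y ω, Z ω)) - ent p Z

end PaperIngleton

/-!
For any `W`, `I(X:Y) ≤ H(W) + I(X:Y|W)`, and for any pair `(A, B)`,
`H(W) ≤ H(W|A) + H(W|B) + I(A:B)`. For the pair `(A, B)` the hypotheses bound
`H(W|A) + H(W|B)` by `I(X:Y|A) + I(X:Y|B) - 2 I(X:Y|W) + 2δ`; for `(A', B')` the Shannon
inequality `H(W|C) ≤ I(X:Y|C) + H(W|X) + H(W|Y)` bounds it by
`I(X:Y|A') + I(X:Y|B') + 4δ`. Adding the two resulting bounds on `I(X:Y)` cancels `I(X:Y|W)`.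

All Shannon inequalities used reduce to `I(X:Y|Z) ≥ 0`, which is Gibbs' inequality comparing the
joint law of `(X, Y, Z)` with the law `P(x,z) P(y,z) / P(z)` under which `X` and `Y` are
conditionally independent given `Z`.
-/

open Real

namespace PaperIngleton

theorem sum_mul_log_le_sum_mul_log {ι : Type*} [Fintype ι] {a q : ι → ℝ}
    (ha : ∀ i, 0 ≤ a i) (hq : ∀ i, 0 ≤ q i) (hsupp : ∀ i, a i ≠ 0 → q i ≠ 0)
    (hsum : ∑ i, q i ≤ ∑ i, a i) :
    ∑ i, a i * log (q i) ≤ ∑ i, a i * log (a i) := by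
  have hterm : ∀ i, a i * log (q i) - a i * log (a i) ≤ q i - a i := by
    intro i
    rcases (ha i).eq_or_lt with h0 | hpos
    · simp [← h0, hq i]
    have hqpos : 0 < q i := (hq i).lt_of_ne' (hsupp i hpos.ne')
    calc a i * log (q i) - a i * log (a i) = a i * log (q i / a i) := by
          rw [log_div hqpos.ne' hpos.ne']; ring
      _ ≤ a i * (q i / a i - 1) := by
          gcongr; exact log_le_sub_one_of_pos (div_pos hqpos hpos)
      _ = q i - a i := by field_simp
  have := Finset.sum_le_sum fun i (_ : i ∈ Finset.univ) => hterm i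
  simp only [Finset.sum_sub_distrib] at this
  linarith

section Entropy

variable {Ω S T U : Type*} [Fintype Ω] (p : Ω → ℝ)

theorem prob_nonneg (hp : ∀ ω, 0 ≤ p ω) (E : Ω → Prop) : 0 ≤ prob p E :=
  Finset.sum_nonneg fun ω _ => by split_ifs <;> simp [hp ω]

theorem prob_mono (hp : ∀ ω, 0 ≤ p ω) {E E' : Ω → Prop} (h : ∀ ω, E ω → E' ω) :
    prob p E ≤ prob p E' :=
  Finset.sum_le_sum fun ω _ => by
    by_cases hE : E ω
    · simp [hE, h ω hE]
    · split_ifs <;> simp [hp ω]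

theorem prob_eq_sum_ite (E : Ω → Prop) [DecidablePred E] :
    prob p E = ∑ ω, if E ω then p ω else 0 := by
  unfold prob
  congr!

theorem sum_mul_prob_eq [Fintype S] (F : Ω → S) (f : S → ℝ) :
    ∑ s, prob p (fun ω => F ω = s) * f s = ∑ ω, p ω * f (F ω) := by
  classical
  simp only [prob_eq_sum_ite, Finset.sum_mul, ite_mul, zero_mul]
  rw [Finset.sum_comm]
  simp

theorem sum_prob_eq [Fintype S] (F : Ω → S) : ∑ s, prob p (fun ω => F ω = s) = ∑ ω, p ω := by
  simpa using sum_mul_prob_eq p F fun _ => 1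

theorem sum_prob_pair_eq [Fintype S] (X : Ω → S) (Z : Ω → U) (z : U) :
    ∑ x, prob p (fun ω => (X ω, Z ω) = (x, z)) = prob p (fun ω => Z ω = z) := by
  classical
  simp only [prob_eq_sum_ite]
  rw [Finset.sum_comm]
  refine Finset.sum_congr rfl fun ω _ => ?_
  by_cases hz : Z ω = z <;> simp [hz]

theorem ent_eq_sum [Fintype S] (F : Ω → S) :
    ent p F = -∑ ω, p ω * log (prob p (fun ω' => F ω' = F ω)) := by
  rw [ent, sum_mul_prob_eq p F fun s => log (prob p fun ω => F ω = s)]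

theorem ent_comp_of_injective [Fintype S] [Fintype T] (F : Ω → S) {g : S → T}
    (hg : Function.Injective g) :
    ent p (fun ω => g (F ω)) = ent p F := by
  simp only [ent_eq_sum, hg.eq_iff]

theorem ent_comp_eq_sum [Fintype S] [Fintype T] (F : Ω → S) (g : S → T) :
    ent p (fun ω => g (F ω))
      = -∑ s, prob p (fun ω => F ω = s) * log (prob p (fun ω => g (F ω) = g s)) := by
  rw [ent_eq_sum, sum_mul_prob_eq p F fun s => log (prob p fun ω => g (F ω) = g s)]

theorem prob_comp_pos (hp : ∀ ω, 0 ≤ p ω) (F : Ω → S) (g : S → T) {s : S}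
    (h : 0 < prob p (fun ω => F ω = s)) : 0 < prob p (fun ω => g (F ω) = g s) :=
  h.trans_le (prob_mono p hp fun ω hω => by rw [hω])

theorem sum_prob_mul_prob_div_prob [Fintype S] [Fintype T] [Fintype U]
    (X : Ω → S) (Y : Ω → T) (Z : Ω → U) :
    ∑ σ : S × T × U, prob p (fun ω => (X ω, Z ω) = (σ.1, σ.2.2))
      * prob p (fun ω => (Y ω, Z ω) = σ.2) / prob p (fun ω => Z ω = σ.2.2) = ∑ ω, p ω := by
  calc _ = ∑ z, (∑ x, prob p (fun ω => (X ω, Z ω) = (x, z)))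
          * (∑ y, prob p (fun ω => (Y ω, Z ω) = (y, z))) / prob p (fun ω => Z ω = z) := by
        simp only [Fintype.sum_prod_type, Finset.sum_mul_sum, Finset.sum_div]
        exact (Finset.sum_congr rfl fun x _ => Finset.sum_comm).trans Finset.sum_comm
    -- `mul_self_div_self` also covers `P(Z = z) = 0`, since `0 / 0 = 0`
    _ = ∑ z, prob p (fun ω => Z ω = z) := by simp only [sum_prob_pair_eq, mul_self_div_self]
    _ = ∑ ω, p ω := sum_prob_eq p Z

theorem cmi_nonneg [Fintype S] [Fintype T] [Fintype U] (hp : ∀ ω, 0 ≤ p ω)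
    (X : Ω → S) (Y : Ω → T) (Z : Ω → U) : 0 ≤ cmi p X Y Z := by
  set F : Ω → S × T × U := fun ω => (X ω, Y ω, Z ω)
  set a : S × T × U → ℝ := fun σ => prob p (fun ω => F ω = σ)
  set pXZ : S × U → ℝ := fun v => prob p (fun ω => (X ω, Z ω) = v)
  set pYZ : T × U → ℝ := fun v => prob p (fun ω => (Y ω, Z ω) = v)
  set pZ : U → ℝ := fun z => prob p (fun ω => Z ω = z)
  set q : S × T × U → ℝ := fun σ => pXZ (σ.1, σ.2.2) * pYZ σ.2 / pZ σ.2.2 with hq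
  have hmarg : ∀ σ, a σ ≠ 0 → 0 < pXZ (σ.1, σ.2.2) ∧ 0 < pYZ σ.2 ∧ 0 < pZ σ.2.2 := by
    intro σ h
    have hpos : 0 < a σ := (prob_nonneg p hp _).lt_of_ne' h
    exact ⟨prob_comp_pos p hp F (fun σ => (σ.1, σ.2.2)) hpos,
      prob_comp_pos p hp F (fun σ => σ.2) hpos, prob_comp_pos p hp F (fun σ => σ.2.2) hpos⟩
  have hlog_q : ∀ σ, a σ * log (q σ)
      = a σ * log (pXZ (σ.1, σ.2.2)) + a σ * log (pYZ σ.2) - a σ * log (pZ σ.2.2) := by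
    intro σ
    by_cases h0 : a σ = 0
    · simp only [h0, zero_mul, add_zero, sub_zero]
    obtain ⟨hXZ, hYZ, hZ⟩ := hmarg σ h0
    rw [hq, log_div (by positivity) hZ.ne', log_mul hXZ.ne' hYZ.ne']
    ring
  have hcmi : cmi p X Y Z = ∑ σ, a σ * log (a σ) - ∑ σ, a σ * log (q σ) := by
    have hXYZ : ent p F = -∑ σ, a σ * log (a σ) := rfl
    have hXZ : ent p (fun ω => (X ω, Z ω)) = -∑ σ, a σ * log (pXZ (σ.1, σ.2.2)) :=
      ent_comp_eq_sum p F fun σ => (σ.1, σ.2.2)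
    have hYZ : ent p (fun ω => (Y ω, Z ω)) = -∑ σ, a σ * log (pYZ σ.2) :=
      ent_comp_eq_sum p F fun σ => σ.2
    have hZ : ent p Z = -∑ σ, a σ * log (pZ σ.2.2) := ent_comp_eq_sum p F fun σ => σ.2.2
    rw [cmi, hXYZ, hXZ, hYZ, hZ]
    simp only [hlog_q, Finset.sum_add_distrib, Finset.sum_sub_distrib]
    ring
  have hq_sum : ∑ σ, q σ = ∑ σ, a σ :=
    (sum_prob_mul_prob_div_prob p X Y Z).trans (sum_prob_eq p F).symm
  rw [hcmi, sub_nonneg]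
  refine sum_mul_log_le_sum_mul_log (fun σ => prob_nonneg p hp _) (fun σ => ?_) (fun σ h => ?_)
    hq_sum.le
  · exact div_nonneg (mul_nonneg (prob_nonneg p hp _) (prob_nonneg p hp _)) (prob_nonneg p hp _)
  · obtain ⟨hXZ, hYZ, hZ⟩ := hmarg σ h
    exact (div_pos (mul_pos hXZ hYZ) hZ).ne'

theorem ent_comp_le [Fintype S] [Fintype T] (hp : ∀ ω, 0 ≤ p ω) (F : Ω → S) (g : S → T) :
    ent p (fun ω => g (F ω)) ≤ ent p F := by
  rw [ent_comp_eq_sum, ent, neg_le_neg_iff]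
  refine Finset.sum_le_sum fun s _ => ?_
  rcases (prob_nonneg p hp fun ω => F ω = s).eq_or_lt with h0 | hpos
  · simp [← h0]
  exact mul_le_mul_of_nonneg_left (log_le_log hpos (prob_mono p hp fun ω hω => by rw [hω]))
    hpos.le

theorem ent_prod_comm [Fintype S] [Fintype T] (X : Ω → S) (Y : Ω → T) :
    ent p (fun ω => (X ω, Y ω)) = ent p (fun ω => (Y ω, X ω)) :=
  ent_comp_of_injective p (fun ω => (Y ω, X ω)) Prod.swap_injective

theorem ent_prod_left_comm [Fintype S] [Fintype T] [Fintype U]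
    (X : Ω → S) (Y : Ω → T) (Z : Ω → U) :
    ent p (fun ω => (X ω, Y ω, Z ω)) = ent p (fun ω => (Y ω, X ω, Z ω)) :=
  ent_comp_of_injective p (fun ω => (Y ω, X ω, Z ω)) (g := fun s => (s.2.1, s.1, s.2.2))
    fun s t h => by simp_all [Prod.ext_iff]

theorem ent_prod_right_comm [Fintype S] [Fintype T] [Fintype U]
    (X : Ω → S) (Y : Ω → T) (Z : Ω → U) :
    ent p (fun ω => (X ω, Y ω, Z ω)) = ent p (fun ω => (X ω, Z ω, Y ω)) :=
  ent_comp_of_injective p (fun ω => (X ω, Z ω, Y ω))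
    (Function.injective_id.prodMap Prod.swap_injective)

end Entropy

section Shannon

variable {Ω S T U V R : Type*} [Fintype Ω] [Fintype S] [Fintype T] [Fintype R]
  (p : Ω → ℝ) (hp : ∀ ω, 0 ≤ p ω)
include hp

theorem mi_le_ent_add_cmi (X : Ω → S) (Y : Ω → T) (W : Ω → R) :
    mi p X Y ≤ ent p W + cmi p X Y W := by
  have hsub := cmi_nonneg p hp X W Y
  have hX : ent p X ≤ ent p (fun ω => (X ω, W ω)) :=
    ent_comp_le p hp (fun ω => (X ω, W ω)) Prod.fst
  simp only [mi, cmi] at hsub ⊢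
  linarith [ent_prod_comm p W Y, ent_prod_right_comm p X W Y]

theorem ent_le_condEnt_add_condEnt_add_mi [Fintype U] [Fintype V]
    (W : Ω → R) (A : Ω → U) (B : Ω → V) :
    ent p W ≤ condEnt p W A + condEnt p W B + mi p A B := by
  have hsub := cmi_nonneg p hp A B W
  have hAB : ent p (fun ω => (A ω, B ω)) ≤ ent p (fun ω => (A ω, B ω, W ω)) :=
    ent_comp_le p hp (fun ω => (A ω, B ω, W ω)) fun s => (s.1, s.2.1)
  simp only [condEnt, mi, cmi] at hsub ⊢
  linarith [ent_prod_comm p A W, ent_prod_comm p B W]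

theorem condEnt_prod_le [Fintype U] (W : Ω → R) (X : Ω → S) (C : Ω → U) :
    condEnt p W (fun ω => (X ω, C ω)) ≤ condEnt p W X := by
  have hsub := cmi_nonneg p hp W C X
  simp only [condEnt, cmi] at hsub ⊢
  linarith [ent_prod_comm p C X, ent_prod_right_comm p W C X]

theorem condEnt_le_cmi_add_condEnt_add_condEnt [Fintype U]
    (X : Ω → S) (Y : Ω → T) (W : Ω → R) (C : Ω → U) :
    condEnt p W C ≤ cmi p X Y C + condEnt p W X + condEnt p W Y := by
  have hcond : condEnt p W C ≤ cmi p X Y C + condEnt p W (fun ω => (X ω, C ω))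
      + condEnt p W (fun ω => (Y ω, C ω)) := by
    have hsub := cmi_nonneg p hp X Y (fun ω => (W ω, C ω))
    have hXYC : ent p (fun ω => (X ω, Y ω, C ω)) ≤ ent p (fun ω => (X ω, Y ω, W ω, C ω)) :=
      ent_comp_le p hp (fun ω => (X ω, Y ω, W ω, C ω)) fun s => (s.1, s.2.1, s.2.2.2)
    simp only [condEnt, cmi] at hsub ⊢
    linarith [ent_prod_left_comm p X W C, ent_prod_left_comm p Y W C]
  linarith [condEnt_prod_le p hp W X C, condEnt_prod_le p hp W Y C]

end Shannon

theorem stmt16_general {Ω S T U V U' V' R : Type} [Fintype Ω] [Fintype S] [Fintype T]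
    [Fintype U] [Fintype V] [Fintype U'] [Fintype V'] [Fintype R]
    (p : Ω → ℝ) (hp : ∀ ω, 0 ≤ p ω)
    (X : Ω → S) (Y : Ω → T) (A : Ω → U) (B : Ω → V)
    (A' : Ω → U') (B' : Ω → V') (W : Ω → R) (δ : ℝ)
    (hWX : max (condEnt p W X) (condEnt p W Y) ≤ δ)
    (hWA : condEnt p W A ≤ cmi p X Y A - cmi p X Y W + δ)
    (hWB : condEnt p W B ≤ cmi p X Y B - cmi p X Y W + δ) :
    2 * mi p X Y ≤ cmi p X Y A + cmi p X Y B + mi p A B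
      + cmi p X Y A' + cmi p X Y B' + mi p A' B' + 6 * δ := by
  have hXY := mi_le_ent_add_cmi p hp X Y W
  have hAB := ent_le_condEnt_add_condEnt_add_mi p hp W A B
  have hA'B' := ent_le_condEnt_add_condEnt_add_mi p hp W A' B'
  have hA' := condEnt_le_cmi_add_condEnt_add_condEnt p hp X Y W A'
  have hB' := condEnt_le_cmi_add_condEnt_add_condEnt p hp X Y W B'
  have hWX' : condEnt p W X ≤ δ := le_of_max_le_left hWX
  have hWY : condEnt p W Y ≤ δ := le_of_max_le_right hWX
  linarith

theorem stmt16 {Ω S T U V U' V' R : Type} [Fintype Ω] [Fintype S] [Fintype T]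
    [Fintype U] [Fintype V] [Fintype U'] [Fintype V'] [Fintype R]
    (p : Ω → ℝ) (hp : ∀ ω, 0 ≤ p ω) (hp1 : ∑ ω, p ω = 1)
    (X : Ω → S) (Y : Ω → T) (A : Ω → U) (B : Ω → V)
    (A' : Ω → U') (B' : Ω → V') (W : Ω → R) (δ : ℝ) (hδ : 0 ≤ δ)
    (hWXY : condEnt p W (fun ω => (X ω, Y ω)) = 0)
    (hWX : max (condEnt p W X) (condEnt p W Y) ≤ δ)
    (hWA : condEnt p W A ≤ cmi p X Y A - cmi p X Y W + δ)
    (hWB : condEnt p W B ≤ cmi p X Y B - cmi p X Y W + δ) :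
    2 * mi p X Y ≤ cmi p X Y A + cmi p X Y B + mi p A B
      + cmi p X Y A' + cmi p X Y B' + mi p A' B' + 6 * δ :=
  stmt16_general p hp X Y A B A' B' W δ hWX hWA hWB

end PaperIngleton
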